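/- Fix r ∉ ℕ with r > 1, set n := ⌊r⌋ + 1 and ρ := r − ⌊r⌋ ∈ (0,1), positions x_j := (j−1)/(2r) for j odd and x_j := 1 − (2n−j)/(2r) for j even (j = 1,…,2n). Let c : [0,1] → [0,1] be differentiable and strictly increasing with c(0) = 0, c(1) = 1, c_j := c(x_j), and fix k ∈ {1,…,n−2}. Define d̂_{k+1} := 0, d̂_j := (1/ρ)·Σ_{i=k+1}^{j−1}(c_{2i} − c_{2i−1}) for k+1 < j ≤ n+1, d̄_{k+1} := 0, d̄_j := (1/(1−ρ))·Σ_{i=k+1}^{j−1}(c_{2i+1} − c_{2i}) for k+1 < j ≤ n, and set z(λ) := Σ_{j=1}^{k} e^{−λ c_{2j−1}}, ẑ(λ) := Σ_{j=k+1}^{n+1} e^{−λ d̂_j}, z̄(λ) := Σ_{j=k+1}^{n} e^{−λ d̄_j}. Then the function g(λ) := λ·(c_{2k+1} − c_1) + log z(λ) − ρ·log ẑ(λ) − (1−ρ)·log z̄(λ) is strictly increasing on [0, ∞). -/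

import Mathlib

open Set

/-- The function
`g(λ) = λ(c_{2k+1} − c_1) + log z(λ) − ρ log ẑ(λ) − (1−ρ) log z̄(λ)`,
whose exponential is the mass ratio `M^<_k/M^>_k`, is strictly increasing on
`[0, ∞)`. -/
theorem stmt14 (r : ℝ) (hrnat : ¬ ∃ k : ℕ, r = (k : ℝ)) (hr1 : 1 < r)
    (n : ℕ) (hn : n = ⌊r⌋₊ + 1) (ρ : ℝ) (hρ : ρ = r - (⌊r⌋₊ : ℝ))
    (x : ℕ → ℝ)
    (hxo : ∀ j, j % 2 = 1 → x j = ((j : ℝ) - 1) / (2 * r))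
    (hxe : ∀ j, j % 2 = 0 → x j = 1 - ((2 * (n : ℝ)) - (j : ℝ)) / (2 * r))
    (c : ℝ → ℝ)
    (hc_diff : DifferentiableOn ℝ c (Icc 0 1))
    (hc_mono : StrictMonoOn c (Icc 0 1))
    (hc_maps : Set.MapsTo c (Icc 0 1) (Icc 0 1))
    (hc0 : c 0 = 0) (hc1 : c 1 = 1)
    (k : ℕ) (hk1 : 1 ≤ k) (hk2 : k ≤ n - 2)
    (dhat dbar : ℕ → ℝ)
    (hdhat : ∀ j, dhat j
      = (1 / ρ) * ∑ i ∈ Finset.Ico (k + 1) j, (c (x (2 * i)) - c (x (2 * i - 1))))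
    (hdbar : ∀ j, dbar j
      = (1 / (1 - ρ)) * ∑ i ∈ Finset.Ico (k + 1) j, (c (x (2 * i + 1)) - c (x (2 * i))))
    (z zhat zbar : ℝ → ℝ)
    (hz : ∀ lam, z lam = ∑ j ∈ Finset.Icc 1 k, Real.exp (-lam * c (x (2 * j - 1))))
    (hzhat : ∀ lam, zhat lam
      = ∑ j ∈ Finset.Icc (k + 1) (n + 1), Real.exp (-lam * dhat j))
    (hzbar : ∀ lam, zbar lam
      = ∑ j ∈ Finset.Icc (k + 1) n, Real.exp (-lam * dbar j))
    (g : ℝ → ℝ)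
    (hg : ∀ lam, g lam
      = lam * (c (x (2 * k + 1)) - c (x 1)) + Real.log (z lam)
        - ρ * Real.log (zhat lam) - (1 - ρ) * Real.log (zbar lam)) :
    StrictMonoOn g (Ici 0) := by
  have hr0 : (0:ℝ) < r := by linarith
  have hN : ((⌊r⌋₊ : ℕ) : ℝ) ≤ r := Nat.floor_le hr0.le
  have hN' : r < (⌊r⌋₊ : ℝ) + 1 := Nat.lt_floor_add_one r
  have hNr : ((⌊r⌋₊ : ℕ) : ℝ) < r := by
    rcases lt_or_eq_of_le hN with h | h
    · exact h
    · exact absurd ⟨⌊r⌋₊, h.symm⟩ hrnat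
  have hρ0 : 0 < ρ := by rw [hρ]; linarith
  have hρ1 : ρ < 1 := by rw [hρ]; linarith
  have hN1 : 1 ≤ ⌊r⌋₊ := Nat.le_floor (by push_cast; linarith)
  have hn2 : 2 ≤ n := by omega
  have hkn : k + 2 ≤ n := by omega
  have hncast : (n : ℝ) = (⌊r⌋₊ : ℝ) + 1 := by rw [hn]; push_cast; ring
  -- explicit formulas for x
  have hxodd : ∀ i, 1 ≤ i → x (2 * i - 1) = ((i : ℝ) - 1) / r := by
    intro i hi
    rw [show 2 * i - 1 = 2 * (i - 1) + 1 from by omega, hxo _ (by omega)]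
    have : ((2 * (i - 1) + 1 : ℕ) : ℝ) = 2 * ((i : ℝ) - 1) + 1 := by
      push_cast [Nat.cast_sub hi]; ring
    rw [this]; field_simp; ring
  have hxodd' : ∀ i : ℕ, x (2 * i + 1) = (i : ℝ) / r := by
    intro i
    rw [hxo _ (by omega)]
    push_cast
    field_simp; ring
  have hxeven : ∀ i : ℕ, x (2 * i) = 1 - ((n : ℝ) - (i : ℝ)) / r := by
    intro i
    rw [hxe _ (by omega)]
    push_cast
    field_simp
  -- memberships
  have hx_odd_mem : ∀ i, 1 ≤ i → i ≤ n → x (2 * i - 1) ∈ Icc (0:ℝ) 1 := by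
    intro i hi1 hi2
    rw [hxodd i hi1]
    have h1 : (1 : ℝ) ≤ (i : ℝ) := by exact_mod_cast hi1
    have h2 : (i : ℝ) ≤ (n : ℝ) := by exact_mod_cast hi2
    constructor
    · exact div_nonneg (by linarith) hr0.le
    · rw [div_le_one hr0]; rw [hncast] at h2; linarith
  have hx_odd'_mem : ∀ i, i + 1 ≤ n → x (2 * i + 1) ∈ Icc (0:ℝ) 1 := by
    intro i hi
    rw [hxodd' i]
    have h2 : (i : ℝ) + 1 ≤ (n : ℝ) := by exact_mod_cast hi
    constructor
    · positivity
    · rw [div_le_one hr0]; rw [hncast] at h2; linarith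
  have hx_even_mem : ∀ i, 1 ≤ i → i ≤ n → x (2 * i) ∈ Icc (0:ℝ) 1 := by
    intro i hi1 hi2
    rw [hxeven i]
    have h1 : (1 : ℝ) ≤ (i : ℝ) := by exact_mod_cast hi1
    have h2 : (i : ℝ) ≤ (n : ℝ) := by exact_mod_cast hi2
    have hd1 : ((n : ℝ) - (i : ℝ)) / r ≤ 1 := by
      rw [div_le_one hr0]; rw [hncast] at *; linarith
    have hd0 : 0 ≤ ((n : ℝ) - (i : ℝ)) / r := by
      apply div_nonneg _ hr0.le; linarith
    constructor <;> [linarith; linarith]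
  -- orderings
  have hlt1 : ∀ i, 1 ≤ i → i ≤ n → x (2 * i - 1) < x (2 * i) := by
    intro i hi1 hi2
    rw [hxodd i hi1, hxeven i]
    have h : ((i:ℝ) - 1) / r + ((n:ℝ) - (i:ℝ)) / r = ((n:ℝ) - 1) / r := by ring
    have h2 : ((n:ℝ) - 1) / r < 1 := by
      rw [div_lt_one hr0, hncast]; linarith
    linarith
  have hlt2 : ∀ i, 1 ≤ i → i + 1 ≤ n → x (2 * i) < x (2 * i + 1) := by
    intro i hi1 hi2
    rw [hxeven i, hxodd' i]
    have h : ((n:ℝ) - (i:ℝ)) / r + (i:ℝ) / r = (n:ℝ) / r := by ring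
    have h2 : (1:ℝ) < (n:ℝ) / r := by
      rw [lt_div_iff₀ hr0, hncast]; linarith
    linarith
  -- positivity of d terms
  have hterm_hat : ∀ i, 1 ≤ i → i ≤ n → 0 < c (x (2 * i)) - c (x (2 * i - 1)) := by
    intro i h1 h2
    have := hc_mono (hx_odd_mem i h1 h2) (hx_even_mem i h1 h2) (hlt1 i h1 h2)
    linarith
  have hterm_bar : ∀ i, 1 ≤ i → i + 1 ≤ n → 0 < c (x (2 * i + 1)) - c (x (2 * i)) := by
    intro i h1 h2
    have := hc_mono (hx_even_mem i h1 (by omega)) (hx_odd'_mem i h2) (hlt2 i h1 h2)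
    linarith
  have hdhat_nonneg : ∀ j, j ≤ n + 1 → 0 ≤ dhat j := by
    intro j hj
    rw [hdhat]
    apply mul_nonneg (one_div_nonneg.2 hρ0.le)
    apply Finset.sum_nonneg
    intro i hi
    rw [Finset.mem_Ico] at hi
    exact (hterm_hat i (by omega) (by omega)).le
  have hdhat_pos : 0 < dhat (k + 2) := by
    rw [hdhat]
    have hset : Finset.Ico (k + 1) (k + 2) = {k + 1} := by
      ext m; simp only [Finset.mem_Ico, Finset.mem_singleton]; omega
    rw [hset, Finset.sum_singleton]
    exact mul_pos (one_div_pos.2 hρ0) (hterm_hat (k + 1) (by omega) (by omega))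
  have hdbar_nonneg : ∀ j, j ≤ n → 0 ≤ dbar j := by
    intro j hj
    rw [hdbar]
    apply mul_nonneg (one_div_nonneg.2 (by linarith))
    apply Finset.sum_nonneg
    intro i hi
    rw [Finset.mem_Ico] at hi
    exact (hterm_bar i (by omega) (by omega)).le
  -- positivity of partition functions
  have hne1 : (Finset.Icc 1 k).Nonempty := ⟨1, Finset.mem_Icc.2 ⟨le_refl 1, hk1⟩⟩
  have hzpos : ∀ lam, 0 < z lam := by
    intro lam; rw [hz]; exact Finset.sum_pos (fun j _ => Real.exp_pos _) hne1
  have hzhatpos : ∀ lam, 0 < zhat lam := by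
    intro lam; rw [hzhat]
    exact Finset.sum_pos (fun j _ => Real.exp_pos _)
      ⟨k + 1, Finset.mem_Icc.2 ⟨le_refl _, by omega⟩⟩
  have hzbarpos : ∀ lam, 0 < zbar lam := by
    intro lam; rw [hzbar]
    exact Finset.sum_pos (fun j _ => Real.exp_pos _)
      ⟨k + 1, Finset.mem_Icc.2 ⟨le_refl _, by omega⟩⟩
  -- c(x 1) = 0
  have hx1 : x 1 = 0 := by rw [hxo 1 rfl]; norm_num
  have hcx1 : c (x 1) = 0 := by rw [hx1, hc0]
  set cA := c (x (2 * k + 1)) with hcA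
  have hcA_gt : ∀ j, 1 ≤ j → j ≤ k → c (x (2 * j - 1)) < cA := by
    intro j hj1 hj2
    apply hc_mono (hx_odd_mem j hj1 (by omega)) (hx_odd'_mem k (by omega))
    rw [hxodd j hj1, hxodd' k]
    have h2 : (j : ℝ) ≤ (k : ℝ) := by exact_mod_cast hj2
    apply (div_lt_div_iff_of_pos_right hr0).2
    linarith
  -- rewriting λ·cA + log z λ
  have hA : ∀ lam : ℝ, lam * cA + Real.log (z lam)
      = Real.log (∑ j ∈ Finset.Icc 1 k, Real.exp (lam * (cA - c (x (2 * j - 1))))) := by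
    intro lam
    have hsum : Real.exp (lam * cA) * ∑ j ∈ Finset.Icc 1 k, Real.exp (-lam * c (x (2 * j - 1)))
        = ∑ j ∈ Finset.Icc 1 k, Real.exp (lam * (cA - c (x (2 * j - 1)))) := by
      rw [Finset.mul_sum]
      apply Finset.sum_congr rfl
      intro j _
      rw [← Real.exp_add]
      congr 1
      ring
    have hzpos' : 0 < ∑ j ∈ Finset.Icc 1 k, Real.exp (-lam * c (x (2 * j - 1))) := by
      rw [← hz]; exact hzpos lam
    rw [← hsum, Real.log_mul (Real.exp_ne_zero _) (ne_of_gt hzpos'), Real.log_exp, hz]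
  -- main argument
  intro a ha b hb hab
  have hAlt : Real.log (∑ j ∈ Finset.Icc 1 k, Real.exp (a * (cA - c (x (2 * j - 1)))))
      < Real.log (∑ j ∈ Finset.Icc 1 k, Real.exp (b * (cA - c (x (2 * j - 1))))) := by
    apply Real.log_lt_log (Finset.sum_pos (fun j _ => Real.exp_pos _) hne1)
    apply Finset.sum_lt_sum_of_nonempty hne1
    intro j hj
    rw [Finset.mem_Icc] at hj
    apply Real.exp_lt_exp.2
    exact mul_lt_mul_of_pos_right hab (by linarith [hcA_gt j hj.1 hj.2])
  have hzhat_lt : zhat b < zhat a := by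
    rw [hzhat, hzhat]
    apply Finset.sum_lt_sum
    · intro j hj
      rw [Finset.mem_Icc] at hj
      apply Real.exp_le_exp.2
      have hd := hdhat_nonneg j hj.2
      nlinarith
    · refine ⟨k + 2, Finset.mem_Icc.2 ⟨by omega, by omega⟩, ?_⟩
      apply Real.exp_lt_exp.2
      nlinarith [hdhat_pos]
  have hzbar_le : zbar b ≤ zbar a := by
    rw [hzbar, hzbar]
    apply Finset.sum_le_sum
    intro j hj
    rw [Finset.mem_Icc] at hj
    apply Real.exp_le_exp.2
    have hd := hdbar_nonneg j hj.2
    nlinarith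
  have hB : ρ * Real.log (zhat b) < ρ * Real.log (zhat a) :=
    mul_lt_mul_of_pos_left (Real.log_lt_log (hzhatpos b) hzhat_lt) hρ0
  have hC : (1 - ρ) * Real.log (zbar b) ≤ (1 - ρ) * Real.log (zbar a) :=
    mul_le_mul_of_nonneg_left (Real.log_le_log (hzbarpos b) hzbar_le) (by linarith)
  rw [hg a, hg b, hcx1, sub_zero]
  have hAa := hA a
  have hAb := hA b
  linarith
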